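/- arXiv:1211.0515 — 6 statements merged into one kernel-verified Lean document; each statement's English description precedes it below -/
import Mathlib

section
/- For every n that is a power of two, the complete binary voting tree whose n leaves are labeled with the n distinct candidates 1,...,n has the property that on any tournament T on [n], the winner it returns has out-degree at least log₂ n in T. -/
/-- A voting tree: a binary tree whose leaves are labeled by candidates. -/
inductive VTree (α : Type) : Type
  | leaf : α → VTree α
  | node : VTree α → VTree α → VTree α

namespace VTree

variable {α β : Type}

/-- Evaluate a voting tree on the `beats` relation `T`: at each internal node the
child's label that beats the other propagates (a label beats itself since `T` is
irreflexive for tournaments). -/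
def eval (T : α → α → Bool) : VTree α → α
  | leaf a => a
  | node l r => if T (eval T l) (eval T r) then eval T l else eval T r

/-- The list of leaf labels, left to right. -/
def leaves : VTree α → List α
  | leaf a => [a]
  | node l r => leaves l ++ leaves r

/-- Relabel the leaves of a voting tree. -/
def map (f : α → β) : VTree α → VTree β
  | leaf a => leaf (f a)
  | node l r => node (map f l) (map f r)

/-- Substitute a voting tree for each leaf. -/
def bind : VTree α → (α → VTree β) → VTree β
  | leaf a, f => f a
  | node l r, f => node (bind l f) (bind r f)

/-- The complete binary tree of depth `d` whose leaves, left to right, are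
`f 0, f 1, …, f (2^d - 1)`. -/
def completeTree (f : ℕ → α) : ℕ → VTree α
  | 0 => leaf (f 0)
  | d + 1 => node (completeTree f d) (completeTree (fun i => f (i + 2 ^ d)) d)

/-- Pair up adjacent trees in a list by a match. -/
def pairUp : List (VTree α) → List (VTree α)
  | a :: b :: rest => node a b :: pairUp rest
  | l => l

theorem pairUp_length : ∀ l : List (VTree α), (pairUp l).length = (l.length + 1) / 2
  | [] => by simp [pairUp]
  | [_] => by simp [pairUp]
  | a :: b :: rest => by
      simp only [pairUp, List.length_cons, pairUp_length rest]
      omega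

/-- Play off a list of trees in a balanced binary fashion (round-robin of rounds). -/
def roundRobin (d : VTree α) : List (VTree α) → VTree α
  | [] => d
  | [t] => t
  | t₁ :: t₂ :: rest => roundRobin d (pairUp (t₁ :: t₂ :: rest))
  termination_by l => l.length
  decreasing_by simp only [pairUp_length, List.length_cons]; omega

/-- The voting tree `Λ_{i:S}`: one leaf-pair `(i, s)` for each `s` in the list `S`,
with the match winners played off in a balanced binary tree. -/
def lambdaTree (i : α) (S : List α) : VTree α :=
  roundRobin (leaf i) (S.map fun s => node (leaf i) (leaf s))

end VTree

/-- A tournament: an irreflexive relation such that for distinct `a`, `b`,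
exactly one of `a` beats `b` or `b` beats `a` holds. -/
def IsTournament {α : Type} (T : α → α → Bool) : Prop :=
  (∀ a, T a a = false) ∧ ∀ a b : α, a ≠ b → T a b = !T b a

/-- The out-degree of a vertex in a tournament on `Fin n`. -/
def outDeg {n : ℕ} (T : Fin n → Fin n → Bool) (v : Fin n) : ℕ :=
  (Finset.univ.filter fun w => T v w).card

theorem eval_mem_leaves {α : Type} (T : α → α → Bool) :
    ∀ t : VTree α, t.eval T ∈ t.leaves
  | .leaf a => by simp [VTree.eval, VTree.leaves]
  | .node l r => by
      simp only [VTree.eval, VTree.leaves, List.mem_append]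
      split
      · exact Or.inl (eval_mem_leaves T l)
      · exact Or.inr (eval_mem_leaves T r)

theorem leaves_completeTree {α : Type} :
    ∀ (d : ℕ) (f : ℕ → α), (VTree.completeTree f d).leaves = (List.range (2 ^ d)).map f
  | 0, f => by rw [pow_zero, show List.range 1 = [0] from rfl]; rfl
  | d + 1, f => by
      simp only [VTree.completeTree, VTree.leaves, leaves_completeTree d]
      rw [pow_succ, Nat.mul_two, List.range_add, List.map_append, List.map_map]
      congr 1
      apply List.map_congr_left
      intro i _
      simp [Nat.add_comm]

theorem completeTree_aux {α : Type} [DecidableEq α] (T : α → α → Bool)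
    (hT : IsTournament T) :
    ∀ (d : ℕ) (f : ℕ → α), (∀ i j, i < 2 ^ d → j < 2 ^ d → f i = f j → i = j) →
    ∃ s : Finset α, (∀ w ∈ s, w ∈ (List.range (2 ^ d)).map f) ∧ d ≤ s.card ∧
      ∀ w ∈ s, T ((VTree.completeTree f d).eval T) w = true
  | 0, f, _ => ⟨∅, by simp⟩
  | d + 1, f, hf => by
      obtain ⟨sl, hslm, hslc, hslb⟩ :=
        completeTree_aux T hT d f (fun i j hi hj => hf i j (by omega) (by omega))
      obtain ⟨sr, hsrm, hsrc, hsrb⟩ :=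
        completeTree_aux T hT d (fun i => f (i + 2 ^ d))
          (fun i j hi hj h => by
            have := hf (i + 2 ^ d) (j + 2 ^ d) (by omega) (by omega) h; omega)
      set el := (VTree.completeTree f d).eval T with hel_def
      set er := (VTree.completeTree (fun i => f (i + 2 ^ d)) d).eval T with her_def
      have hel : el ∈ (List.range (2 ^ d)).map f := by
        rw [hel_def, ← leaves_completeTree d f]; exact eval_mem_leaves T _
      have her : er ∈ (List.range (2 ^ d)).map (fun i => f (i + 2 ^ d)) := by
        rw [her_def, ← leaves_completeTree d _]; exact eval_mem_leaves T _
      have hdis : ∀ a ∈ (List.range (2 ^ d)).map f,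
          ∀ b ∈ (List.range (2 ^ d)).map (fun i => f (i + 2 ^ d)), a ≠ b := by
        intro a ha b hb hab
        simp only [List.mem_map, List.mem_range] at ha hb
        obtain ⟨i, hi, rfl⟩ := ha
        obtain ⟨j, hj, rfl⟩ := hb
        have := hf i (j + 2 ^ d) (by omega) (by omega) hab
        omega
      have hmemL : ∀ w ∈ (List.range (2 ^ d)).map f,
          w ∈ (List.range (2 ^ (d + 1))).map f := by
        intro w hw
        simp only [List.mem_map, List.mem_range] at hw ⊢
        obtain ⟨i, hi, rfl⟩ := hw
        exact ⟨i, by rw [pow_succ]; omega, rfl⟩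
      have hmemR : ∀ w ∈ (List.range (2 ^ d)).map (fun i => f (i + 2 ^ d)),
          w ∈ (List.range (2 ^ (d + 1))).map f := by
        intro w hw
        simp only [List.mem_map, List.mem_range] at hw ⊢
        obtain ⟨i, hi, rfl⟩ := hw
        exact ⟨i + 2 ^ d, by rw [pow_succ]; omega, rfl⟩
      by_cases hT' : T el er = true
      · have heval : (VTree.completeTree f (d + 1)).eval T = el := by
          simp only [VTree.completeTree, VTree.eval, ← hel_def, ← her_def, hT', if_true]
        have hernot : er ∉ sl := fun h => hdis er (hslm er h) er her rfl
        refine ⟨insert er sl, ?_, ?_, ?_⟩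
        · intro w hw
          rcases Finset.mem_insert.1 hw with rfl | hw
          · exact hmemR er her
          · exact hmemL w (hslm w hw)
        · rw [Finset.card_insert_of_notMem hernot]; omega
        · intro w hw
          rcases Finset.mem_insert.1 hw with rfl | hw
          · rw [heval]; exact hT'
          · rw [heval]; exact hslb w hw
      · have heval : (VTree.completeTree f (d + 1)).eval T = er := by
          simp only [VTree.completeTree, VTree.eval, ← hel_def, ← her_def]
          rw [if_neg (by simpa using hT')]
        have hne : er ≠ el := fun h => hdis el hel er her h.symm
        have hbeat : T er el = true := by
          have := hT.2 el er (fun h => hne h.symm)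
          rw [this] at hT'
          simpa using hT'
        have helnot : el ∉ sr := fun h => hdis el hel el (hsrm el h) rfl
        refine ⟨insert el sr, ?_, ?_, ?_⟩
        · intro w hw
          rcases Finset.mem_insert.1 hw with rfl | hw
          · exact hmemL el hel
          · exact hmemR w (hsrm w hw)
        · rw [Finset.card_insert_of_notMem helnot]; omega
        · intro w hw
          rcases Finset.mem_insert.1 hw with rfl | hw
          · rw [heval]; exact hbeat
          · rw [heval]; exact hsrb w hw

/-- On any tournament on `[n]` with `n = 2^d`, the complete binary voting tree
whose `n` leaves are the `n` distinct candidates guarantees a winner of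
out-degree at least `log₂ n = d`. -/
theorem completeTree_outDeg_ge_log {d n : ℕ} (hn : n = 2 ^ d)
    (T : Fin n → Fin n → Bool) (hT : IsTournament T) :
    d ≤ outDeg T ((VTree.completeTree
      (fun i : ℕ => (⟨i % n, Nat.mod_lt i (hn ▸ Nat.two_pow_pos d)⟩ : Fin n)) d).eval T) := by
  set f : ℕ → Fin n :=
    fun i : ℕ => (⟨i % n, Nat.mod_lt i (hn ▸ Nat.two_pow_pos d)⟩ : Fin n) with hf_def
  have hinj : ∀ i j, i < 2 ^ d → j < 2 ^ d → f i = f j → i = j := by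
    intro i j hi hj h
    have hi' : i < n := hn ▸ hi
    have hj' : j < n := hn ▸ hj
    have : i % n = j % n := congrArg Fin.val h
    rwa [Nat.mod_eq_of_lt hi', Nat.mod_eq_of_lt hj'] at this
  obtain ⟨s, _, hcard, hbeat⟩ := completeTree_aux T hT d f hinj
  have hsub : s ⊆ Finset.univ.filter
      (fun w => T ((VTree.completeTree f d).eval T) w) := by
    intro w hw
    simp only [Finset.mem_filter, Finset.mem_univ, true_and]
    exact hbeat w hw
  calc d ≤ s.card := hcard
    _ ≤ _ := Finset.card_le_card hsub
end

section
/- Let i ∈ [n] and let S ⊆ [n] \ {i} be nonempty. Consider the voting tree Λ_{i:S}: a complete binary tree with |S| pairs of leaves, where for each s ∈ S one pair of sibling leaves is labeled (i, s). Then for any tournament T on [n], the winner of Λ_{i:S} on T is either i (in which case i beats every element of S in T), or some s ∈ S that beats i in T. -/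
namespace VTree

variable {α : Type} (T : α → α → Bool) (i : α) (S : Finset α)

/-- A tree is `Good` if it either evaluates to `i` and `i` beats all its other leaves,
or evaluates to an element of `S` that beats `i`. -/
def Good [DecidableEq α] (t : VTree α) : Prop :=
  (t.eval T = i ∧ ∀ a ∈ t.leaves, a ≠ i → T i a) ∨ (t.eval T ∈ S ∧ T (t.eval T) i)

variable [DecidableEq α]

lemma good_node (hT : IsTournament T) {l r : VTree α} (hl : Good T i S l) (hr : Good T i S r) :
    Good T i S (node l r) := by
  have hnode : (node l r).eval T = if T (l.eval T) (r.eval T) then l.eval T else r.eval T := rfl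
  rcases hl with ⟨hle, hll⟩ | ⟨hls, hlb⟩ <;> rcases hr with ⟨hre, hrl⟩ | ⟨hrs, hrb⟩
  · left
    constructor
    · rw [hnode, hle, hre]; simp
    · intro a ha
      simp only [leaves, List.mem_append] at ha
      rcases ha with h | h
      · exact hll a h
      · exact hrl a h
  · -- left evals to i, right evals to s ∈ S with T s i
    right
    have hne : r.eval T ≠ i := by
      intro h; rw [h] at hrb; rw [hT.1 i] at hrb; exact absurd hrb (by simp)
    have : T i (r.eval T) = false := by
      rw [hT.2 i (r.eval T) (Ne.symm hne), hrb]; rfl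
    rw [hnode, hle, this]
    simp [hrs, hrb]
  · right
    rw [hnode, hre, hlb]
    simp [hls, hlb]
  · right
    rw [hnode]
    by_cases h : T (l.eval T) (r.eval T) <;> simp [h, hls, hlb, hrs, hrb]

lemma pairUp_good (hT : IsTournament T) : ∀ l : List (VTree α), (∀ t ∈ l, Good T i S t) →
    ∀ t ∈ pairUp l, Good T i S t
  | [], h => by simp [pairUp]
  | [t], h => by simpa [pairUp] using h
  | a :: b :: rest, h => by
      intro t ht
      simp only [pairUp, List.mem_cons] at ht
      rcases ht with rfl | ht
      · exact good_node T i S hT (h a (by simp)) (h b (by simp))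
      · exact pairUp_good hT rest (fun t' ht' => h t' (by simp [ht'])) t ht

lemma pairUp_leaves : ∀ l : List (VTree α), ∀ a : α, (∃ t ∈ l, a ∈ t.leaves) →
    ∃ t ∈ pairUp l, a ∈ t.leaves
  | [], a, h => by simpa [pairUp] using h
  | [t], a, h => by simpa [pairUp] using h
  | t₁ :: t₂ :: rest, a, h => by
      rcases h with ⟨t, ht, hat⟩
      simp only [List.mem_cons] at ht
      rcases ht with rfl | rfl | ht
      · exact ⟨node t t₂, by simp [pairUp], by simp [leaves, hat]⟩
      · exact ⟨node t₁ t, by simp [pairUp], by simp [leaves, hat]⟩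
      · obtain ⟨t', ht', hat'⟩ := pairUp_leaves rest a ⟨t, ht, hat⟩
        exact ⟨t', by simp [pairUp, ht'], hat'⟩

lemma roundRobin_good (hT : IsTournament T) (d : VTree α) :
    ∀ l : List (VTree α), l ≠ [] → (∀ t ∈ l, Good T i S t) →
    Good T i S (roundRobin d l) ∧
      ∀ a : α, (∃ t ∈ l, a ∈ t.leaves) → a ∈ (roundRobin d l).leaves
  | [], h, _ => absurd rfl h
  | [t], _, h => by
      refine ⟨by simpa [roundRobin] using h t (by simp), ?_⟩
      intro a ha
      simp only [List.mem_singleton, exists_eq_left] at ha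
      simpa [roundRobin] using ha
  | t₁ :: t₂ :: rest, _, h => by
      rw [show roundRobin d (t₁ :: t₂ :: rest) = roundRobin d (pairUp (t₁ :: t₂ :: rest))
        from by rw [roundRobin]]
      have hlen : (pairUp (t₁ :: t₂ :: rest)).length < (t₁ :: t₂ :: rest).length := by
        simp only [pairUp_length, List.length_cons]; omega
      have hne : pairUp (t₁ :: t₂ :: rest) ≠ [] := by simp [pairUp]
      obtain ⟨hg, hl⟩ := roundRobin_good hT d (pairUp (t₁ :: t₂ :: rest)) hne
        (pairUp_good T i S hT _ h)
      exact ⟨hg, fun a ha => hl a (pairUp_leaves _ a ha)⟩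
  termination_by l => l.length
  decreasing_by simp only [pairUp_length, List.length_cons]; omega

end VTree

/-- The winner of `Λ_{i:S}` on a tournament `T` is either `i`, in which case `i`
beats every element of `S`, or some `s ∈ S` that beats `i`. -/
theorem lambdaTree_winner {n : ℕ} (T : Fin n → Fin n → Bool) (hT : IsTournament T)
    (i : Fin n) (S : Finset (Fin n)) (hiS : i ∉ S) (hS : S.Nonempty) :
    ((VTree.lambdaTree i S.toList).eval T = i ∧ ∀ s ∈ S, T i s) ∨
      (∃ s ∈ S, (VTree.lambdaTree i S.toList).eval T = s ∧ T s i) := by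
  classical
  set L := S.toList.map fun s => VTree.node (VTree.leaf i) (VTree.leaf s) with hL
  have hLne : L ≠ [] := by
    simp [hL, Finset.toList_eq_nil]
    exact hS.ne_empty
  have hgood : ∀ t ∈ L, VTree.Good T i S t := by
    intro t ht
    simp only [hL, List.mem_map, Finset.mem_toList] at ht
    obtain ⟨s, hsS, rfl⟩ := ht
    have hsi : s ≠ i := fun h => hiS (h ▸ hsS)
    have heval : (VTree.node (VTree.leaf i) (VTree.leaf s)).eval T
        = if T i s then i else s := rfl
    by_cases h : T i s
    · left
      refine ⟨by rw [heval]; simp [h], ?_⟩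
      intro a ha hai
      simp only [VTree.leaves, List.mem_append, List.mem_singleton] at ha
      rcases ha with rfl | rfl
      · exact absurd rfl hai
      · exact h
    · right
      have : T s i = true := by
        rw [hT.2 s i hsi]
        simp [h]
      rw [heval]
      simp [h, hsS, this]
  obtain ⟨hg, hleaf⟩ := VTree.roundRobin_good T i S hT (VTree.leaf i) L hLne hgood
  have hlam : VTree.lambdaTree i S.toList = VTree.roundRobin (VTree.leaf i) L := rfl
  rcases hg with ⟨he, hall⟩ | ⟨hs, hb⟩
  · left
    refine ⟨by rw [hlam]; exact he, ?_⟩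
    intro s hsS
    have hsi : s ≠ i := fun h => hiS (h ▸ hsS)
    apply hall s _ hsi
    apply hleaf
    exact ⟨VTree.node (VTree.leaf i) (VTree.leaf s),
      by simp [hL, Finset.mem_toList, hsS], by simp [VTree.leaves]⟩
  · right
    exact ⟨_, hs, by rw [hlam], hb⟩
end

section
/- Let T be a perfect manipulator tournament on [n] with parts {α}, B, C. For i ∈ [n], let Λ_i be the voting tree Λ_{i:S} with S = [n] \ {i} (a complete binary balanced pairing where i is matched against every other candidate, with the n−1 match winners then played off in a balanced binary tree). Then the winner of Λ_i on T lies in C if i = α, in {α} if i ∈ B, and in B if i ∈ C. -/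
/-- A perfect manipulator tournament on `Fin n` with manipulator `a` and parts
`{a}`, `B`, `C`: `B`, `C` are nonempty, the three parts partition the vertices,
`a` beats all of `B`, every member of `B` beats every member of `C`, and every
member of `C` beats `a`. -/
def IsPerfectManipulator {n : ℕ} (T : Fin n → Fin n → Bool) (a : Fin n)
    (B C : Finset (Fin n)) : Prop :=
  IsTournament T ∧ B.Nonempty ∧ C.Nonempty ∧ a ∉ B ∧ a ∉ C ∧ Disjoint B C ∧
    insert a (B ∪ C) = Finset.univ ∧
    (∀ b ∈ B, T a b) ∧ (∀ b ∈ B, ∀ c ∈ C, T b c) ∧ (∀ c ∈ C, T c a)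

/-- `Λ_i`: the voting tree in which `i` is matched against every other candidate,
with the winners played off in a balanced binary tree. -/
noncomputable def lambdaFull {n : ℕ} (i : Fin n) : VTree (Fin n) :=
  VTree.lambdaTree i ((Finset.univ.erase i).toList)

namespace VTree

variable {γ : Type}

lemma node_good (T : γ → γ → Bool) {G H : γ → Prop}
    (hGH : ∀ g h, G g → H h → T g h = true ∧ T h g = false)
    (l r : VTree γ)
    (hl : G (eval T l) ∨ H (eval T l)) (hr : G (eval T r) ∨ H (eval T r)) :
    G (eval T (node l r)) ∨ H (eval T (node l r)) := by
  simp only [eval]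
  rcases hl with hl | hl <;> rcases hr with hr | hr
  · split
    · exact Or.inl hl
    · exact Or.inl hr
  · rw [if_pos (hGH _ _ hl hr).1]; exact Or.inl hl
  · rw [if_neg (by simp [(hGH _ _ hr hl).2])]; exact Or.inl hr
  · split
    · exact Or.inr hl
    · exact Or.inr hr

lemma node_G (T : γ → γ → Bool) {G H : γ → Prop}
    (hGH : ∀ g h, G g → H h → T g h = true ∧ T h g = false)
    (l r : VTree γ)
    (hl : G (eval T l) ∨ H (eval T l)) (hr : G (eval T r) ∨ H (eval T r))
    (hG : G (eval T l) ∨ G (eval T r)) :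
    G (eval T (node l r)) := by
  simp only [eval]
  rcases hG with hG | hG
  · rcases hr with hr | hr
    · split
      · exact hG
      · exact hr
    · rw [if_pos (hGH _ _ hG hr).1]; exact hG
  · rcases hl with hl | hl
    · split
      · exact hl
      · exact hG
    · rw [if_neg (by simp [(hGH _ _ hG hl).2])]; exact hG

lemma pairUp_good_s6 (T : γ → γ → Bool) {G H : γ → Prop}
    (hGH : ∀ g h, G g → H h → T g h = true ∧ T h g = false) :
    ∀ l : List (VTree γ), (∀ t ∈ l, G (eval T t) ∨ H (eval T t)) →
      ∀ t ∈ pairUp l, G (eval T t) ∨ H (eval T t)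
  | [] => by simp [pairUp]
  | [t] => by simp [pairUp]
  | a :: b :: rest => by
      intro hall t ht
      simp only [pairUp, List.mem_cons] at ht
      rcases ht with rfl | ht
      · exact node_good T hGH a b (hall a (by simp)) (hall b (by simp))
      · exact pairUp_good_s6 T hGH rest (fun t ht => hall t (by simp [ht])) t ht

lemma pairUp_ex (T : γ → γ → Bool) {G H : γ → Prop}
    (hGH : ∀ g h, G g → H h → T g h = true ∧ T h g = false) :
    ∀ l : List (VTree γ), (∀ t ∈ l, G (eval T t) ∨ H (eval T t)) →
      (∃ t ∈ l, G (eval T t)) → ∃ t ∈ pairUp l, G (eval T t)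
  | [] => by simp [pairUp]
  | [t] => by simp [pairUp]
  | a :: b :: rest => by
      intro hall ⟨t, ht, hG⟩
      simp only [List.mem_cons] at ht
      have ha := hall a (by simp)
      have hb := hall b (by simp)
      rcases ht with rfl | rfl | ht
      · exact ⟨node t b, by simp [pairUp],
          node_G T hGH _ _ ha hb (Or.inl hG)⟩
      · exact ⟨node a t, by simp [pairUp],
          node_G T hGH _ _ ha hb (Or.inr hG)⟩
      · obtain ⟨t', ht', hG'⟩ := pairUp_ex T hGH rest
          (fun t ht => hall t (by simp [ht])) ⟨t, ht, hG⟩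
        exact ⟨t', by simp [pairUp, ht'], hG'⟩

lemma roundRobin_mem (T : γ → γ → Bool) {G H : γ → Prop}
    (hGH : ∀ g h, G g → H h → T g h = true ∧ T h g = false) (d : VTree γ) :
    ∀ l : List (VTree γ), (∀ t ∈ l, G (eval T t) ∨ H (eval T t)) →
      (∃ t ∈ l, G (eval T t)) → G (eval T (roundRobin d l))
  | [], _, hex => by simp at hex
  | [t], _, hex => by
      obtain ⟨t', ht', hG⟩ := hex
      simp only [List.mem_singleton] at ht'
      subst ht'
      simpa [roundRobin] using hG
  | t₁ :: t₂ :: rest, hall, hex => by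
      rw [roundRobin]
      exact roundRobin_mem T hGH d _ (pairUp_good_s6 T hGH _ hall)
        (pairUp_ex T hGH _ hall hex)
  termination_by l => l.length
  decreasing_by simp only [pairUp_length, List.length_cons]; omega

end VTree

/-- Rotation lemma: on a perfect manipulator tournament with parts `{α}`, `B`,
`C`, the winner of `Λ_i` lies in `C` if `i = α`, equals `α` if `i ∈ B`, and lies
in `B` if `i ∈ C`. -/
theorem lambdaFull_rotates {n : ℕ} (T : Fin n → Fin n → Bool) (a : Fin n)
    (B C : Finset (Fin n)) (hpm : IsPerfectManipulator T a B C) (i : Fin n) :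
    (i = a → (lambdaFull i).eval T ∈ C) ∧
    (i ∈ B → (lambdaFull i).eval T = a) ∧
    (i ∈ C → (lambdaFull i).eval T ∈ B) := by
  obtain ⟨⟨hirr, hasym⟩, hBne, hCne, haB, haC, hBC, hpart, haBwin, hBCwin, hCawin⟩ := hpm
  have hpart' : ∀ x : Fin n, x = a ∨ x ∈ B ∨ x ∈ C := by
    intro x
    have : x ∈ insert a (B ∪ C) := hpart ▸ Finset.mem_univ x
    simpa [Finset.mem_insert, Finset.mem_union] using this
  have hflip : ∀ x y : Fin n, x ≠ y → T x y = true → T y x = false := by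
    intro x y hxy hT
    rw [hasym y x (Ne.symm hxy), hT]; rfl
  -- evaluation of a leaf pair
  have hpair : ∀ s : Fin n,
      VTree.eval T (VTree.node (VTree.leaf i) (VTree.leaf s)) =
        if T i s then i else s := by
    intro s; rfl
  have hmemS : ∀ s : Fin n, s ≠ i →
      (VTree.node (VTree.leaf i) (VTree.leaf s)) ∈
        ((Finset.univ.erase i).toList.map fun s => VTree.node (VTree.leaf i) (VTree.leaf s)) := by
    intro s hs
    exact List.mem_map.mpr ⟨s, by simp [Finset.mem_toList, hs], rfl⟩
  have hSmem : ∀ t ∈ ((Finset.univ.erase i).toList.map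
      fun s => VTree.node (VTree.leaf i) (VTree.leaf s)),
      ∃ s : Fin n, s ≠ i ∧ t = VTree.node (VTree.leaf i) (VTree.leaf s) := by
    intro t ht
    obtain ⟨s, hs, rfl⟩ := List.mem_map.mp ht
    exact ⟨s, by simpa [Finset.mem_toList] using hs, rfl⟩
  unfold lambdaFull VTree.lambdaTree
  refine ⟨?_, ?_, ?_⟩
  · -- i = a : winner in C
    rintro rfl
    obtain ⟨c, hc⟩ := hCne
    have hic : i ≠ c := fun h => haC (h ▸ hc)
    refine VTree.roundRobin_mem T (G := (· ∈ C)) (H := (· = i)) ?_ _ _ ?_ ?_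
    · rintro g h hg rfl
      exact ⟨hCawin g hg, hflip g h (fun he => haC (he ▸ hg)) (hCawin g hg)⟩
    · intro t ht
      obtain ⟨s, hsi, rfl⟩ := hSmem t ht
      rw [hpair]
      rcases hpart' s with rfl | hs | hs
      · exact absurd rfl hsi
      · rw [if_pos (haBwin s hs)]; exact Or.inr rfl
      · rw [if_neg (by simp [hflip s i hsi (hCawin s hs)])]
        exact Or.inl hs
    · refine ⟨_, hmemS c hic.symm, ?_⟩
      rw [hpair, if_neg (by simp [hflip c i hic.symm (hCawin c hc)])]
      exact hc
  · -- i ∈ B : winner = a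
    intro hiB
    have hia : i ≠ a := fun h => haB (h ▸ hiB)
    refine VTree.roundRobin_mem T (G := (· = a)) (H := (· ∈ B)) ?_ _ _ ?_ ?_
    · intro g h hg hh
      subst hg
      exact ⟨haBwin h hh, hflip g h (fun he => haB (he ▸ hh)) (haBwin h hh)⟩
    · intro t ht
      obtain ⟨s, hsi, rfl⟩ := hSmem t ht
      rw [hpair]
      rcases hpart' s with rfl | hs | hs
      · rw [if_neg (by simp [hflip s i hia.symm (haBwin i hiB)])]
        exact Or.inl rfl
      · split
        · exact Or.inr hiB
        · exact Or.inr hs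
      · rw [if_pos (hBCwin i hiB s hs)]; exact Or.inr hiB
    · refine ⟨_, hmemS a hia.symm, ?_⟩
      rw [hpair, if_neg (by simp [hflip a i hia.symm (haBwin i hiB)])]
  · -- i ∈ C : winner in B
    intro hiC
    obtain ⟨b, hb⟩ := hBne
    have hbi : b ≠ i := fun h => (Finset.disjoint_left.mp hBC hb) (h ▸ hiC)
    refine VTree.roundRobin_mem T (G := (· ∈ B)) (H := (· ∈ C)) ?_ _ _ ?_ ?_
    · intro g h hg hh
      exact ⟨hBCwin g hg h hh,
        hflip g h (fun he => (Finset.disjoint_left.mp hBC hg) (he ▸ hh))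
          (hBCwin g hg h hh)⟩
    · intro t ht
      obtain ⟨s, hsi, rfl⟩ := hSmem t ht
      rw [hpair]
      rcases hpart' s with rfl | hs | hs
      · rw [if_pos (hCawin i hiC)]; exact Or.inr hiC
      · rw [if_neg (by simp [hflip s i hsi (hBCwin s hs i hiC)])]
        exact Or.inl hs
      · split
        · exact Or.inr hiC
        · exact Or.inr hs
    · refine ⟨_, hmemS b hbi, ?_⟩
      rw [hpair, if_neg (by simp [hflip b i hbi (hBCwin b hb i hiC)])]
      exact hb
end

section
/- There exists a voting tree Σ with leaves labeled in {0, 1, 2, X, Y} such that for every non-transitive tournament T on 𝔽₃ = {0,1,2} and all x, y ∈ 𝔽₃, substituting x for all X-leaves and y for all Y-leaves and evaluating Σ on T yields x + y (mod 3). -/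
/-- A non-transitive tournament on `{0,1,2}`: one of the two cyclic orientations. -/
def NonTransitive3 (T : Fin 3 → Fin 3 → Bool) : Prop :=
  IsTournament T ∧
    ((T 0 1 ∧ T 1 2 ∧ T 2 0) ∨ (T 0 2 ∧ T 2 1 ∧ T 1 0))

/-- There is a voting tree `Σ` with leaves labeled by constants `0,1,2` and
variables `X, Y` which, after substituting `x` for `X` and `y` for `Y`, computes
`x + y` in `𝔽₃` on every non-transitive tournament on `{0,1,2}`. -/
theorem exists_addition_tree :
    ∃ Sig : VTree (Fin 3 ⊕ Fin 2),
      ∀ T : Fin 3 → Fin 3 → Bool, NonTransitive3 T → ∀ x y : Fin 3,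
        (Sig.map (Sum.elim id (fun v => if v = 0 then x else y))).eval T = x + y := by
  refine ⟨.node (.node (.node (.leaf (.inr 0)) (.node (.leaf (.inr 1)) (.node (.leaf (.inl 0)) (.leaf (.inr 0))))) (.node (.leaf (.inl 0)) (.node (.node (.leaf (.inl 0)) (.leaf (.inl 1))) (.node (.leaf (.inl 2)) (.node (.node (.leaf (.inl 1)) (.leaf (.inl 2))) (.node (.leaf (.inl 0)) (.node (.node (.leaf (.inl 1)) (.leaf (.inr 0))) (.node (.leaf (.inl 2)) (.leaf (.inr 1)))))))))) (.node (.node (.leaf (.inl 1)) (.leaf (.inl 2))) (.node (.node (.node (.leaf (.inl 0)) (.leaf (.inr 0))) (.node (.leaf (.inl 1)) (.leaf (.inl 2)))) (.node (.node (.leaf (.inl 0)) (.leaf (.inr 1))) (.node (.node (.leaf (.inl 1)) (.node (.leaf (.inr 0)) (.leaf (.inr 1)))) (.node (.leaf (.inl 2)) (.node (.leaf (.inr 0)) (.leaf (.inr 1)))))))), ?_⟩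
  intro T hT x y
  obtain ⟨⟨hirr, hasym⟩, hcyc⟩ := hT
  rcases hcyc with ⟨h01, h12, h20⟩ | ⟨h02, h21, h10⟩
  · have f10 : T 1 0 = false := by rw [hasym 1 0 (by decide), h01]; rfl
    have f21 : T 2 1 = false := by rw [hasym 2 1 (by decide), h12]; rfl
    have f02 : T 0 2 = false := by rw [hasym 0 2 (by decide), h20]; rfl
    have hTeq : T = fun a b => decide ((b - a : Fin 3) = 1) := by
      funext a b
      fin_cases a <;> fin_cases b
      · show T 0 0 = false; exact hirr 0
      · show T 0 1 = true; exact h01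
      · show T 0 2 = false; exact f02
      · show T 1 0 = false; exact f10
      · show T 1 1 = false; exact hirr 1
      · show T 1 2 = true; exact h12
      · show T 2 0 = true; exact h20
      · show T 2 1 = false; exact f21
      · show T 2 2 = false; exact hirr 2
    subst hTeq; revert x y; decide
  · have f20 : T 2 0 = false := by rw [hasym 2 0 (by decide), h02]; rfl
    have f12 : T 1 2 = false := by rw [hasym 1 2 (by decide), h21]; rfl
    have f01 : T 0 1 = false := by rw [hasym 0 1 (by decide), h10]; rfl
    have hTeq : T = fun a b => decide ((b - a : Fin 3) = 2) := by
      funext a b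
      fin_cases a <;> fin_cases b
      · show T 0 0 = false; exact hirr 0
      · show T 0 1 = false; exact f01
      · show T 0 2 = true; exact h02
      · show T 1 0 = true; exact h10
      · show T 1 1 = false; exact hirr 1
      · show T 1 2 = false; exact f12
      · show T 2 0 = false; exact f20
      · show T 2 1 = true; exact h21
      · show T 2 2 = false; exact hirr 2
    subst hTeq; revert x y; decide
end

section
/- There exists a voting tree Π with leaves labeled in {0, 1, 2, X, Y} such that for every non-transitive tournament T on 𝔽₃ = {0,1,2} and all x, y ∈ 𝔽₃, substituting x for X and y for Y throughout and evaluating Π on T yields x·y (mod 3). -/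
set_option maxRecDepth 4000

namespace MulTreeAux

abbrev A3 := Sum (Fin 3) (Fin 2)
def nd : VTree A3 → VTree A3 → VTree A3 := VTree.node
def K0 : VTree A3 := VTree.leaf (Sum.inl 0)
def K1 : VTree A3 := VTree.leaf (Sum.inl 1)
def K2 : VTree A3 := VTree.leaf (Sum.inl 2)
def VX : VTree A3 := VTree.leaf (Sum.inr 0)
def VY : VTree A3 := VTree.leaf (Sum.inr 1)

def bigTree : VTree A3 :=
(nd (nd (nd (nd (nd (nd (nd (nd (nd (nd (nd (nd (nd (nd (nd (nd VX VY) K0) VX) (nd (nd VY K0) K1)) (nd (nd (nd (nd VX VY) K0) VY) (nd (nd (nd VX VY) K0) (nd (nd VX K1) (nd VY K2))))) (nd (nd (nd (nd (nd VX VY) K0) VX) (nd (nd (nd VX VY) (nd VY K0)) K2)) (nd (nd (nd (nd VX VY) K0) (nd (nd VX VY) K2)) K1))) (nd (nd (nd (nd (nd (nd VX VY) K0) VX) (nd (nd (nd VX VY) (nd VY K0)) K2)) K1) (nd (nd (nd (nd (nd VX VY) K1) (nd (nd VX K0) VY)) (nd (nd VX K1) (nd VY K1))) (nd (nd (nd (nd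 VX VY) (nd VX K0)) K2) (nd (nd (nd VY K0) (nd VY K2)) K1))))) K0) K1) (nd (nd (nd (nd (nd (nd (nd (nd (nd (nd (nd (nd (nd (nd VX VY) K0) VX) (nd (nd VY K0) K2)) (nd (nd (nd (nd VX VY) K0) VY) (nd (nd (nd VX VY) K0) (nd (nd VX K2) (nd VY K1))))) (nd (nd (nd (nd (nd VX VY) K0) VX) (nd (nd (nd VX VY) (nd VY K0)) K1)) (nd (nd (nd (nd VX VY) K0) (nd (nd VX VY) K1)) K2))) (nd (nd (nd (nd (nd (nd VX VY) K0) VX) (nd (nd (nd VX VY) (nd VY K0)) K1)) K2) (nd (nd (nd (nd (nd VX VY) K2) (nd (nd VX K0) VY)) (nd (nd VX K2) (nd VY K2))) (nd (nd (nd (nd VX VY) (nd VX K0)) K1) (nd (nd (nd VY K0) (nd VY K1)) K2))))) K1) K0) K2) K1) (nd (nd (nd (nd (nd (nd (nd (nd VX VY) K0) VX) (nd (nd VY K0) K2)) (nd (nd (nd (nd VX VY) K0) VY) (nd (nd (nd VX VY) K0) (nd (nd VX K2) (nd VY K1))))) (nd (nd (nd (nd (nd VX VY) K0) VX) (nd (nd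 (nd VX VY) (nd VY K0)) K1)) (nd (nd (nd (nd VX VY) K0) (nd (nd VX VY) K1)) K2))) (nd (nd (nd (nd (nd (nd VX VY) K0) VX) (nd (nd (nd VX VY) (nd VY K0)) K1)) K2) (nd (nd (nd (nd (nd VX VY) K2) (nd (nd VX K0) VY)) (nd (nd VX K2) (nd VY K2))) (nd (nd (nd (nd VX VY) (nd VX K0)) K1) (nd (nd (nd VY K0) (nd VY K1)) K2))))) K0)) K2) K1)) (nd (nd (nd (nd (nd (nd (nd (nd (nd (nd VX VY) K0) VX) (nd (nd VY K0) K1)) (nd (nd (nd (nd VX VY) K0) VY) (nd (nd (nd VX VY) K0) (nd (nd VX K1) (nd VY K2))))) (nd (nd (nd (nd (nd VX VY) K0) VX) (nd (nd (nd VX VY) (nd VY K0)) K2)) (nd (nd (nd (nd VX VY) K0) (nd (nd VX VY) K2)) K1))) (nd (nd (nd (nd (nd (nd VX VY) K0) VX) (nd (nd (nd VX VY) (nd VY K0)) K2)) K1) (nd (nd (nd (nd (nd VX VY) K1) (nd (nd VX K0) VY)) (nd (nd VX K1) (nd VY K1))) (nd (nd (nd (nd VX VY) (nd VX K0)) K2)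 (nd (nd (nd VY K0) (nd VY K2)) K1))))) K2) K0) (nd (nd (nd (nd (nd (nd (nd (nd (nd (nd (nd (nd (nd (nd VX VY) K0) VX) (nd (nd VY K0) K2)) (nd (nd (nd (nd VX VY) K0) VY) (nd (nd (nd VX VY) K0) (nd (nd VX K2) (nd VY K1))))) (nd (nd (nd (nd (nd VX VY) K0) VX) (nd (nd (nd VX VY) (nd VY K0)) K1)) (nd (nd (nd (nd VX VY) K0) (nd (nd VX VY) K1)) K2))) (nd (nd (nd (nd (nd (nd VX VY) K0) VX) (nd (nd (nd VX VY) (nd VY K0)) K1)) K2) (nd (nd (nd (nd (nd VX VY) K2) (nd (nd VX K0) VY)) (nd (nd VX K2) (nd VY K2))) (nd (nd (nd (nd VX VY) (nd VX K0)) K1) (nd (nd (nd VY K0) (nd VY K1)) K2))))) K1) K0) K2) K1) (nd (nd (nd (nd (nd (nd (nd (nd VX VY) K0) VX) (nd (nd VY K0) K2)) (nd (nd (nd (nd VX VY) K0) VY) (nd (nd (nd VX VY) K0) (nd (nd VX K2) (nd VY K1))))) (nd (nd (nd (nd (nd VX VY) K0) VX) (nd (nd (nd VX VY) (nd VY K0))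 K1)) (nd (nd (nd (nd VX VY) K0) (nd (nd VX VY) K1)) K2))) (nd (nd (nd (nd (nd (nd VX VY) K0) VX) (nd (nd (nd VX VY) (nd VY K0)) K1)) K2) (nd (nd (nd (nd (nd VX VY) K2) (nd (nd VX K0) VY)) (nd (nd VX K2) (nd VY K2))) (nd (nd (nd (nd VX VY) (nd VX K0)) K1) (nd (nd (nd VY K0) (nd VY K1)) K2))))) K0)) K1) K0))) K1) (nd K0 K2)) K2) (nd K0 K1)) (nd (nd (nd (nd (nd (nd (nd (nd (nd (nd (nd (nd (nd (nd (nd VX VY) K0) VX) (nd (nd VY K0) K1)) (nd (nd (nd (nd VX VY) K0) VY) (nd (nd (nd VX VY) K0) (nd (nd VX K1) (nd VY K2))))) (nd (nd (nd (nd (nd VX VY) K0) VX) (nd (nd (nd VX VY) (nd VY K0)) K2)) (nd (nd (nd (nd VX VY) K0) (nd (nd VX VY) K2)) K1))) (nd (nd (nd (nd (nd (nd VX VY) K0) VX) (nd (nd (nd VX VY) (nd VY K0)) K2)) K1) (nd (nd (nd (nd (nd VX VY) K1) (nd (nd VX K0) VY)) (nd (nd VX K1) (nd VY K1))) (nd (nd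 (nd (nd VX VY) (nd VX K0)) K2) (nd (nd (nd VY K0) (nd VY K2)) K1))))) K0) K1) (nd (nd (nd (nd (nd (nd (nd (nd (nd (nd (nd (nd (nd (nd VX VY) K0) VX) (nd (nd VY K0) K2)) (nd (nd (nd (nd VX VY) K0) VY) (nd (nd (nd VX VY) K0) (nd (nd VX K2) (nd VY K1))))) (nd (nd (nd (nd (nd VX VY) K0) VX) (nd (nd (nd VX VY) (nd VY K0)) K1)) (nd (nd (nd (nd VX VY) K0) (nd (nd VX VY) K1)) K2))) (nd (nd (nd (nd (nd (nd VX VY) K0) VX) (nd (nd (nd VX VY) (nd VY K0)) K1)) K2) (nd (nd (nd (nd (nd VX VY) K2) (nd (nd VX K0) VY)) (nd (nd VX K2) (nd VY K2))) (nd (nd (nd (nd VX VY) (nd VX K0)) K1) (nd (nd (nd VY K0) (nd VY K1)) K2))))) K1) K0) K2) K1) (nd (nd (nd (nd (nd (nd (nd (nd VX VY) K0) VX) (nd (nd VY K0) K2)) (nd (nd (nd (nd VX VY) K0) VY) (nd (nd (nd VX VY) K0) (nd (nd VX K2) (nd VY K1))))) (nd (nd (nd (nd (nd VX VY) K0) VX)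 (nd (nd (nd VX VY) (nd VY K0)) K1)) (nd (nd (nd (nd VX VY) K0) (nd (nd VX VY) K1)) K2))) (nd (nd (nd (nd (nd (nd VX VY) K0) VX) (nd (nd (nd VX VY) (nd VY K0)) K1)) K2) (nd (nd (nd (nd (nd VX VY) K2) (nd (nd VX K0) VY)) (nd (nd VX K2) (nd VY K2))) (nd (nd (nd (nd VX VY) (nd VX K0)) K1) (nd (nd (nd VY K0) (nd VY K1)) K2))))) K0)) K2) K1)) (nd (nd (nd (nd (nd (nd (nd (nd (nd (nd VX VY) K0) VX) (nd (nd VY K0) K1)) (nd (nd (nd (nd VX VY) K0) VY) (nd (nd (nd VX VY) K0) (nd (nd VX K1) (nd VY K2))))) (nd (nd (nd (nd (nd VX VY) K0) VX) (nd (nd (nd VX VY) (nd VY K0)) K2)) (nd (nd (nd (nd VX VY) K0) (nd (nd VX VY) K2)) K1))) (nd (nd (nd (nd (nd (nd VX VY) K0) VX) (nd (nd (nd VX VY) (nd VY K0)) K2)) K1) (nd (nd (nd (nd (nd VX VY) K1) (nd (nd VX K0) VY)) (nd (nd VX K1) (nd VY K1))) (nd (nd (nd (nd VX VY) (nd VX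 K0)) K2) (nd (nd (nd VY K0) (nd VY K2)) K1))))) K2) K0) (nd (nd (nd (nd (nd (nd (nd (nd (nd (nd (nd (nd (nd (nd VX VY) K0) VX) (nd (nd VY K0) K2)) (nd (nd (nd (nd VX VY) K0) VY) (nd (nd (nd VX VY) K0) (nd (nd VX K2) (nd VY K1))))) (nd (nd (nd (nd (nd VX VY) K0) VX) (nd (nd (nd VX VY) (nd VY K0)) K1)) (nd (nd (nd (nd VX VY) K0) (nd (nd VX VY) K1)) K2))) (nd (nd (nd (nd (nd (nd VX VY) K0) VX) (nd (nd (nd VX VY) (nd VY K0)) K1)) K2) (nd (nd (nd (nd (nd VX VY) K2) (nd (nd VX K0) VY)) (nd (nd VX K2) (nd VY K2))) (nd (nd (nd (nd VX VY) (nd VX K0)) K1) (nd (nd (nd VY K0) (nd VY K1)) K2))))) K1) K0) K2) K1) (nd (nd (nd (nd (nd (nd (nd (nd VX VY) K0) VX) (nd (nd VY K0) K2)) (nd (nd (nd (nd VX VY) K0) VY) (nd (nd (nd VX VY) K0) (nd (nd VX K2) (nd VY K1))))) (nd (nd (nd (nd (nd VX VY) K0) VX) (nd (nd (nd VX VY)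 (nd VY K0)) K1)) (nd (nd (nd (nd VX VY) K0) (nd (nd VX VY) K1)) K2))) (nd (nd (nd (nd (nd (nd VX VY) K0) VX) (nd (nd (nd VX VY) (nd VY K0)) K1)) K2) (nd (nd (nd (nd (nd VX VY) K2) (nd (nd VX K0) VY)) (nd (nd VX K2) (nd VY K2))) (nd (nd (nd (nd VX VY) (nd VX K0)) K1) (nd (nd (nd VY K0) (nd VY K1)) K2))))) K0)) K1) K0))) K2) (nd K0 K1)) K1) (nd K0 K2)))

def T1 : Fin 3 → Fin 3 → Bool := fun a b => decide (b = a + 1)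
def T2 : Fin 3 → Fin 3 → Bool := fun a b => decide (a = b + 1)

theorem tournament_cases (T : Fin 3 → Fin 3 → Bool) (h : NonTransitive3 T) :
    T = T1 ∨ T = T2 := by
  obtain ⟨⟨irr, anti⟩, hc | hc⟩ := h
  · left
    obtain ⟨h01, h12, h20⟩ := hc
    have h10 := anti 1 0 (by decide)
    have h21 := anti 2 1 (by decide)
    have h02 := anti 0 2 (by decide)
    funext a b
    fin_cases a <;> fin_cases b <;>
      first
        | exact irr _
        | exact h01 | exact h12 | exact h20
        | exact h10.trans (by rw [h01]; rfl)
        | exact h21.trans (by rw [h12]; rfl)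
        | exact h02.trans (by rw [h20]; rfl)
  · right
    obtain ⟨h02, h21, h10⟩ := hc
    have h01 := anti 0 1 (by decide)
    have h12 := anti 1 2 (by decide)
    have h20 := anti 2 0 (by decide)
    funext a b
    fin_cases a <;> fin_cases b <;>
      first
        | exact irr _
        | exact h02 | exact h21 | exact h10
        | exact h01.trans (by rw [h10]; rfl)
        | exact h12.trans (by rw [h21]; rfl)
        | exact h20.trans (by rw [h02]; rfl)

theorem eval_T1 : ∀ x y : Fin 3,
    ((bigTree).map (Sum.elim id (fun v => if v = 0 then x else y))).eval T1 = x * y := by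
  decide

theorem eval_T2 : ∀ x y : Fin 3,
    ((bigTree).map (Sum.elim id (fun v => if v = 0 then x else y))).eval T2 = x * y := by
  decide

end MulTreeAux

/-- There is a voting tree `Π` with leaves labeled by constants `0,1,2` and
variables `X, Y` which, after substituting `x` for `X` and `y` for `Y`, computes
`x · y` in `𝔽₃` on every non-transitive tournament on `{0,1,2}`. -/

theorem exists_multiplication_tree :
    ∃ Pi' : VTree (Fin 3 ⊕ Fin 2),
      ∀ T : Fin 3 → Fin 3 → Bool, NonTransitive3 T → ∀ x y : Fin 3,
        (Pi'.map (Sum.elim id (fun v => if v = 0 then x else y))).eval T = x * y := by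
  refine ⟨MulTreeAux.bigTree, fun T hT x y => ?_⟩
  rcases MulTreeAux.tournament_cases T hT with rfl | rfl
  · exact MulTreeAux.eval_T1 x y
  · exact MulTreeAux.eval_T2 x y
end

section
/- There exists a voting tree with leaves labeled in {0,1,2,X} such that for every non-transitive tournament T on 𝔽₃ and every x ∈ 𝔽₃, substituting x for X and evaluating on T yields x² (mod 3), i.e., 0 if x = 0 and 1 otherwise. -/
namespace SquaringAux

open VTree

def L (c : Fin 3) : VTree (Fin 3 ⊕ Unit) := VTree.leaf (Sum.inl c)
def X : VTree (Fin 3 ⊕ Unit) := VTree.leaf (Sum.inr ())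

def t : VTree (Fin 3 ⊕ Unit) :=
  VTree.node
    (VTree.node (VTree.node (L 0) (L 2)) (VTree.node (L 1) (L 2)))
    (VTree.node (L 1)
      (VTree.node (VTree.node (L 1) X)
        (VTree.node (VTree.node (L 1) (L 2))
          (VTree.node (VTree.node (L 0) (L 2))
            (VTree.node (L 1) (VTree.node (L 2) X))))))

def T1 : Fin 3 → Fin 3 → Bool := fun a b =>
  (a = 0 && b = 1) || (a = 1 && b = 2) || (a = 2 && b = 0)

def T2 : Fin 3 → Fin 3 → Bool := fun a b =>
  (a = 0 && b = 2) || (a = 2 && b = 1) || (a = 1 && b = 0)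

lemma key1 : ∀ x : Fin 3, (t.map (Sum.elim id fun _ => x)).eval T1 = x ^ 2 := by decide

lemma key2 : ∀ x : Fin 3, (t.map (Sum.elim id fun _ => x)).eval T2 = x ^ 2 := by decide

end SquaringAux

/-- There is a voting tree with leaves labeled by constants `0,1,2` and a
variable `X` which, after substituting `x` for `X`, computes `x²` in `𝔽₃` on
every non-transitive tournament on `{0,1,2}`. -/
theorem exists_squaring_tree :
    ∃ t : VTree (Fin 3 ⊕ Unit),
      ∀ T : Fin 3 → Fin 3 → Bool, NonTransitive3 T → ∀ x : Fin 3,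
        (t.map (Sum.elim id (fun _ => x))).eval T = x ^ 2 := by
  refine ⟨SquaringAux.t, ?_⟩
  rintro T ⟨⟨hirr, hasym⟩, hcyc | hcyc⟩ x
  · have e01 : T 0 1 = true := hcyc.1
    have e12 : T 1 2 = true := hcyc.2.1
    have e20 : T 2 0 = true := hcyc.2.2
    have e10 : T 1 0 = false := by rw [hasym 1 0 (by decide), e01]; rfl
    have e21 : T 2 1 = false := by rw [hasym 2 1 (by decide), e12]; rfl
    have e02 : T 0 2 = false := by rw [hasym 0 2 (by decide), e20]; rfl
    have hT : T = SquaringAux.T1 := by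
      funext a b
      fin_cases a <;> fin_cases b <;>
        first | exact hirr _ | exact e01 | exact e12 | exact e20
              | exact e10 | exact e21 | exact e02
    rw [hT]; exact SquaringAux.key1 x
  · have e02 : T 0 2 = true := hcyc.1
    have e21 : T 2 1 = true := hcyc.2.1
    have e10 : T 1 0 = true := hcyc.2.2
    have e20 : T 2 0 = false := by rw [hasym 2 0 (by decide), e02]; rfl
    have e12 : T 1 2 = false := by rw [hasym 1 2 (by decide), e21]; rfl
    have e01 : T 0 1 = false := by rw [hasym 0 1 (by decide), e10]; rfl
    have hT : T = SquaringAux.T2 := by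
      funext a b
      fin_cases a <;> fin_cases b <;>
        first | exact hirr _ | exact e01 | exact e12 | exact e20
              | exact e10 | exact e21 | exact e02
    rw [hT]; exact SquaringAux.key2 x
end
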